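/- arXiv:1906.09231 — 3 statements merged into one kernel-verified Lean document; each statement's English description precedes it below -/
import Mathlib

section
/- Let X be a zero-mean σ-subgaussian random variable, i.e., E[X] = 0 and E[exp(λX)] ≤ exp(λ²σ²/2) for all λ ∈ ℝ. Then for every λ ∈ [0,1), E[exp(λX²/(2σ²))] ≤ 1/√(1 − λ). -/
/-!
Linearize the square by a Gaussian integral (Hubbard–Stratonovich): for `k > 0`,
`exp (k x² / 2) · √(2πk) = ∫ exp (s x - s² / (2k)) ds`. Taking expectations, swapping the two
integrals and bounding `E[exp (s X)] ≤ exp (s² σ² / 2)` leaves the Gaussian integral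
`∫ exp (-(1 - kσ²) s² / (2k)) ds = √(2πk / (1 - kσ²))`; dividing by `√(2πk)` gives the bound
with `k = λ / σ²`.
-/

open MeasureTheory Real

lemma lintegral_ofReal_exp_neg_mul_sub_sq {b : ℝ} (hb : 0 < b) (c : ℝ) :
    ∫⁻ s : ℝ, ENNReal.ofReal (exp (-b * (s - c) ^ 2)) = ENNReal.ofReal (√(π / b)) := by
  simp_rw [sub_eq_add_neg]
  rw [lintegral_add_right_eq_self (fun s : ℝ => ENNReal.ofReal (exp (-b * s ^ 2))) (-c),
    ← ofReal_integral_eq_lintegral_ofReal (integrable_exp_neg_mul_sq hb)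
      (Filter.Eventually.of_forall fun _ => (exp_pos _).le), integral_gaussian]

lemma lintegral_ofReal_exp_mul_sub_sq_div {k : ℝ} (hk : 0 < k) (x : ℝ) :
    ∫⁻ s : ℝ, ENNReal.ofReal (exp (s * x - s ^ 2 / (2 * k))) =
      ENNReal.ofReal (exp (k * x ^ 2 / 2)) * ENNReal.ofReal (√(2 * π * k)) := by
  have complete_square : ∀ s : ℝ, exp (s * x - s ^ 2 / (2 * k)) =
      exp (k * x ^ 2 / 2) * exp (-(1 / (2 * k)) * (s - k * x) ^ 2) := fun s => by
    rw [← exp_add]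
    congr 1
    field_simp
    ring
  simp_rw [complete_square, ENNReal.ofReal_mul (exp_pos _).le]
  rw [lintegral_const_mul' _ _ ENNReal.ofReal_ne_top,
    lintegral_ofReal_exp_neg_mul_sub_sq (by positivity), one_div, div_inv_eq_mul, ← mul_assoc,
    mul_comm π 2]

section

variable {Ω : Type*} [MeasurableSpace Ω] {μ : Measure Ω} [SFinite μ] {X : Ω → ℝ} {σ : ℝ}

lemma lintegral_ofReal_exp_mul_sq_mul_le_of_mgf_le (hX : Measurable X)
    (hmgf : ∀ s : ℝ, ∫⁻ ω, ENNReal.ofReal (exp (s * X ω)) ∂μ ≤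
      ENNReal.ofReal (exp (s ^ 2 * σ ^ 2 / 2)))
    {k : ℝ} (hk : 0 < k) (hkσ : k * σ ^ 2 < 1) :
    (∫⁻ ω, ENNReal.ofReal (exp (k * X ω ^ 2 / 2)) ∂μ) * ENNReal.ofReal (√(2 * π * k)) ≤
      ENNReal.ofReal (√(π / ((1 - k * σ ^ 2) / (2 * k)))) := by
  have hb : 0 < (1 - k * σ ^ 2) / (2 * k) := div_pos (by linarith) (by positivity)
  have hmeas : Measurable fun p : Ω × ℝ =>
      ENNReal.ofReal (exp (p.2 * X p.1 - p.2 ^ 2 / (2 * k))) := by fun_prop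
  calc (∫⁻ ω, ENNReal.ofReal (exp (k * X ω ^ 2 / 2)) ∂μ) * ENNReal.ofReal (√(2 * π * k))
      = ∫⁻ ω, ∫⁻ s : ℝ, ENNReal.ofReal (exp (s * X ω - s ^ 2 / (2 * k))) ∂volume ∂μ := by
        simp_rw [lintegral_ofReal_exp_mul_sub_sq_div hk]
        exact (lintegral_mul_const' _ _ ENNReal.ofReal_ne_top).symm
    _ = ∫⁻ s : ℝ, ∫⁻ ω, ENNReal.ofReal (exp (s * X ω - s ^ 2 / (2 * k))) ∂μ :=
        lintegral_lintegral_swap hmeas.aemeasurable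
    _ ≤ ∫⁻ s : ℝ, ENNReal.ofReal (exp (-((1 - k * σ ^ 2) / (2 * k)) * s ^ 2)) := by
        refine lintegral_mono fun s => ?_
        have split : ∀ ω, exp (s * X ω - s ^ 2 / (2 * k)) =
            exp (s * X ω) * exp (-(s ^ 2 / (2 * k))) := fun ω => by
          rw [← exp_add, sub_eq_add_neg]
        simp_rw [split, ENNReal.ofReal_mul (exp_pos _).le]
        rw [lintegral_mul_const' _ _ ENNReal.ofReal_ne_top]
        calc _ ≤ ENNReal.ofReal (exp (s ^ 2 * σ ^ 2 / 2)) *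
              ENNReal.ofReal (exp (-(s ^ 2 / (2 * k)))) := mul_le_mul_left (hmgf s) _
          _ = _ := by
              rw [← ENNReal.ofReal_mul (exp_pos _).le, ← exp_add]
              congr 2
              field_simp
              ring
    _ = _ := by simpa using lintegral_ofReal_exp_neg_mul_sub_sq hb 0

theorem lintegral_ofReal_exp_mul_sq_le_of_mgf_le (hX : Measurable X)
    (hmgf : ∀ s : ℝ, ∫⁻ ω, ENNReal.ofReal (exp (s * X ω)) ∂μ ≤
      ENNReal.ofReal (exp (s ^ 2 * σ ^ 2 / 2)))
    {k : ℝ} (hk : 0 ≤ k) (hkσ : k * σ ^ 2 < 1) :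
    ∫⁻ ω, ENNReal.ofReal (exp (k * X ω ^ 2 / 2)) ∂μ ≤ ENNReal.ofReal (1 / √(1 - k * σ ^ 2)) := by
  rcases hk.eq_or_lt with rfl | hk
  · simpa using hmgf 0
  have hC : ENNReal.ofReal (√(2 * π * k)) ≠ 0 := by
    rw [ne_eq, ENNReal.ofReal_eq_zero, not_le]
    positivity
  have hσk : 0 < 1 - k * σ ^ 2 := by linarith
  have gaussian_ratio : √(π / ((1 - k * σ ^ 2) / (2 * k))) =
      1 / √(1 - k * σ ^ 2) * √(2 * π * k) := by
    rw [one_div, ← sqrt_inv, ← sqrt_mul (by positivity)]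
    congr 1
    field_simp
  have h := lintegral_ofReal_exp_mul_sq_mul_le_of_mgf_le hX hmgf hk hkσ
  rw [gaussian_ratio, ENNReal.ofReal_mul (by positivity)] at h
  exact (ENNReal.mul_le_mul_iff_left hC ENNReal.ofReal_ne_top).mp h

end

theorem subgaussian_square_mgf_general {Ω : Type*} [MeasurableSpace Ω]
    (P : Measure Ω) [IsProbabilityMeasure P]
    (X : Ω → ℝ) (hX : Measurable X) (σ : ℝ) (hσ : 0 < σ)
    (hsub : ∀ l : ℝ,
      ∫⁻ ω, ENNReal.ofReal (Real.exp (l * X ω)) ∂P ≤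
        ENNReal.ofReal (Real.exp (l ^ 2 * σ ^ 2 / 2))) :
    ∀ l : ℝ, 0 ≤ l → l < 1 →
      ∫⁻ ω, ENNReal.ofReal (Real.exp (l * (X ω) ^ 2 / (2 * σ ^ 2))) ∂P ≤
        ENNReal.ofReal (1 / Real.sqrt (1 - l)) := by
  intro l hl0 hl1
  have hσ2 : σ ^ 2 ≠ 0 := by positivity
  have hk : l / σ ^ 2 * σ ^ 2 = l := div_mul_cancel₀ l hσ2
  have h := lintegral_ofReal_exp_mul_sq_le_of_mgf_le hX hsub (div_nonneg hl0 (sq_nonneg σ))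
    (by rwa [hk])
  rw [hk] at h
  convert h using 5
  field_simp

/-- If `X` is a zero-mean `σ`-subgaussian random variable, then for every
`λ ∈ [0,1)`, `E[exp (λ X² / (2σ²))] ≤ 1/√(1-λ)`. -/
theorem subgaussian_square_mgf {Ω : Type*} [MeasurableSpace Ω]
    (P : Measure Ω) [IsProbabilityMeasure P]
    (X : Ω → ℝ) (hX : Measurable X) (σ : ℝ) (hσ : 0 < σ)
    (hint : Integrable X P) (hmean : ∫ ω, X ω ∂P = 0)
    (hsub : ∀ l : ℝ,
      ∫⁻ ω, ENNReal.ofReal (Real.exp (l * X ω)) ∂P ≤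
        ENNReal.ofReal (Real.exp (l ^ 2 * σ ^ 2 / 2))) :
    ∀ l : ℝ, 0 ≤ l → l < 1 →
      ∫⁻ ω, ENNReal.ofReal (Real.exp (l * (X ω) ^ 2 / (2 * σ ^ 2))) ∂P ≤
        ENNReal.ofReal (1 / Real.sqrt (1 - l)) :=
  subgaussian_square_mgf_general P X hX σ hσ hsub
end

section
/- Let Q be a probability measure on ℝ, let m ∈ ℝ, and suppose that under Q the identity random variable centered at m is σ-subgaussian, i.e., ∫ exp(λ(x − m)) dQ(x) ≤ exp(λ²σ²/2) for all λ ∈ ℝ. Then for every probability measure P on ℝ with P ≪ Q and every λ ∈ [0,1): D_KL(P ‖ Q) ≥ (λ/(2σ²))·∫ (x − m)² dP(x) − ln(1/√(1 − λ)). -/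
open MeasureTheory Real Classical

/-- The Kullback–Leibler divergence `D_KL(P ‖ Q)`, valued in `EReal`: it equals
`∫ log (dP/dQ) dP` when `P ≪ Q` and the log-likelihood ratio is `P`-integrable,
and `⊤` otherwise. -/
noncomputable def klDiv {α : Type*} [MeasurableSpace α] (P Q : Measure α) : EReal :=
  if P ≪ Q ∧ Integrable (fun x => Real.log (P.rnDeriv Q x).toReal) P then
    ((∫ x, Real.log (P.rnDeriv Q x).toReal ∂P : ℝ) : EReal)
  else ⊤

/-!
By the Donsker–Varadhan inequality, `D(P ‖ Q) ≥ ∫ f dP - log ∫ exp f dQ` for every `f`; take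
`f x = λ (x - m)² / (2σ²)`. The sub-Gaussian hypothesis bounds `∫ exp f dQ` by `1 / √(1 - λ)`:
writing `exp (y² / 4a) = √(a / π) ∫ exp (-a t² + t y) dt` with `a = σ² / (2λ)` and exchanging the
integrals turns the square-exponential moment into a Gaussian average of the moment generating
function, `√(a / π) ∫ exp (-a t²) exp (t² σ² / 2) dt = 1 / √(1 - λ)`.
-/

lemma lintegral_exp_neg_mul_sq {b : ℝ} (hb : 0 < b) :
    ∫⁻ t : ℝ, ENNReal.ofReal (exp (-b * t ^ 2)) = ENNReal.ofReal √(π / b) := by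
  rw [← ofReal_integral_eq_lintegral_ofReal (integrable_exp_neg_mul_sq hb)
    (ae_of_all _ fun _ => (exp_pos _).le), integral_gaussian]

lemma lintegral_exp_neg_mul_sq_add_mul {a : ℝ} (ha : 0 < a) (y : ℝ) :
    ∫⁻ t : ℝ, ENNReal.ofReal (exp (-a * t ^ 2 + t * y)) =
      ENNReal.ofReal (exp (y ^ 2 / (4 * a))) * ENNReal.ofReal √(π / a) := by
  have hsquare (t : ℝ) : -a * t ^ 2 + t * y = y ^ 2 / (4 * a) + -a * (t - y / (2 * a)) ^ 2 := by
    field_simp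
    ring
  simp_rw [hsquare, exp_add, ENNReal.ofReal_mul (exp_pos _).le]
  rw [lintegral_const_mul' _ _ ENNReal.ofReal_ne_top,
    lintegral_sub_right_eq_self (fun t => ENNReal.ofReal (exp (-a * t ^ 2))),
    lintegral_exp_neg_mul_sq ha]

lemma one_le_one_div_sqrt_one_sub {l : ℝ} (hl0 : 0 ≤ l) (hl1 : l < 1) : 1 ≤ 1 / √(1 - l) :=
  (one_le_div (Real.sqrt_pos.mpr (by linarith))).mpr (Real.sqrt_le_one.mpr (by linarith))

section GaussianMixture

variable {Ω : Type*} [MeasurableSpace Ω] {μ : Measure Ω} [SFinite μ] {X : Ω → ℝ}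

lemma lintegral_exp_sq_div_mul_sqrt_eq (hX : Measurable X) {a : ℝ} (ha : 0 < a) :
    (∫⁻ ω, ENNReal.ofReal (exp (X ω ^ 2 / (4 * a))) ∂μ) * ENNReal.ofReal √(π / a) =
      ∫⁻ t : ℝ, ENNReal.ofReal (exp (-a * t ^ 2)) *
        ∫⁻ ω, ENNReal.ofReal (exp (t * X ω)) ∂μ := by
  calc (∫⁻ ω, ENNReal.ofReal (exp (X ω ^ 2 / (4 * a))) ∂μ) * ENNReal.ofReal √(π / a)
      = ∫⁻ ω, (∫⁻ t : ℝ, ENNReal.ofReal (exp (-a * t ^ 2 + t * X ω))) ∂μ := by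
        simp_rw [← lintegral_mul_const' _ _ ENNReal.ofReal_ne_top,
          lintegral_exp_neg_mul_sq_add_mul ha]
    _ = ∫⁻ t : ℝ, ∫⁻ ω, ENNReal.ofReal (exp (-a * t ^ 2 + t * X ω)) ∂μ :=
        lintegral_lintegral_swap (by fun_prop)
    _ = _ := by
        simp_rw [exp_add, ENNReal.ofReal_mul (exp_pos _).le,
          lintegral_const_mul' _ _ ENNReal.ofReal_ne_top]

lemma lintegral_exp_mul_sq_le_of_lintegral_exp_mul_le (hX : Measurable X) {σ l : ℝ}
    (hmgf : ∀ t : ℝ, ∫⁻ ω, ENNReal.ofReal (exp (t * X ω)) ∂μ ≤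
      ENNReal.ofReal (exp (t ^ 2 * σ ^ 2 / 2)))
    (hl0 : 0 ≤ l) (hl1 : l < 1) :
    ∫⁻ ω, ENNReal.ofReal (exp (l / (2 * σ ^ 2) * X ω ^ 2)) ∂μ ≤
      ENNReal.ofReal (1 / √(1 - l)) := by
  obtain hc | hc := (div_nonneg hl0 (by positivity : 0 ≤ 2 * σ ^ 2)).eq_or_lt
  -- `l = 0`, or `σ = 0` and the coefficient is `l / 0 = 0`
  · calc ∫⁻ ω, ENNReal.ofReal (exp (l / (2 * σ ^ 2) * X ω ^ 2)) ∂μ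
          = ∫⁻ ω, ENNReal.ofReal (exp (0 * X ω)) ∂μ := by simp [← hc]
      _ ≤ 1 := by simpa using hmgf 0
      _ ≤ ENNReal.ofReal (1 / √(1 - l)) :=
          ENNReal.one_le_ofReal.mpr (one_le_one_div_sqrt_one_sub hl0 hl1)
  have hσ : 0 < σ ^ 2 := (sq_nonneg σ).lt_of_ne fun h => by simp [← h] at hc
  have hl : 0 < l := (div_pos_iff_of_pos_right (by positivity)).mp hc
  set a := σ ^ 2 / (2 * l) with ha_def
  have ha : 0 < a := by positivity
  have hK : ENNReal.ofReal √(π / a) ≠ 0 := by simpa using by positivity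
  refine (ENNReal.mul_le_mul_iff_left hK ENNReal.ofReal_ne_top).mp ?_
  calc (∫⁻ ω, ENNReal.ofReal (exp (l / (2 * σ ^ 2) * X ω ^ 2)) ∂μ) * ENNReal.ofReal √(π / a)
      = ∫⁻ t : ℝ, ENNReal.ofReal (exp (-a * t ^ 2)) *
          ∫⁻ ω, ENNReal.ofReal (exp (t * X ω)) ∂μ := by
        have hcoeff (ω : Ω) : l / (2 * σ ^ 2) * X ω ^ 2 = X ω ^ 2 / (4 * a) := by
          rw [ha_def]; field_simp; ring
        simp_rw [hcoeff, lintegral_exp_sq_div_mul_sqrt_eq hX ha]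
    _ ≤ ∫⁻ t : ℝ, ENNReal.ofReal (exp (-a * t ^ 2)) * ENNReal.ofReal (exp (t ^ 2 * σ ^ 2 / 2)) := by
        gcongr with t
        exact hmgf t
    _ = ∫⁻ t : ℝ, ENNReal.ofReal (exp (-(a * (1 - l)) * t ^ 2)) := by
        congr with t
        rw [← ENNReal.ofReal_mul (exp_pos _).le, ← exp_add, ha_def]
        congr 2
        field_simp
        ring
    _ = ENNReal.ofReal (1 / √(1 - l)) * ENNReal.ofReal √(π / a) := by
        rw [lintegral_exp_neg_mul_sq (by nlinarith), ← ENNReal.ofReal_mul (by positivity),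
          div_mul_eq_div_div, Real.sqrt_div' _ (by linarith : 0 ≤ 1 - l), one_div_mul_eq_div]

end GaussianMixture

section DonskerVaradhan

variable {α : Type*} [MeasurableSpace α] {P Q : Measure α} [IsProbabilityMeasure P]

lemma klDiv_nonneg [IsProbabilityMeasure Q] : 0 ≤ klDiv P Q := by
  unfold klDiv
  split_ifs with h
  · have hgibbs := InformationTheory.integral_llr_add_sub_measure_univ_nonneg h.1 h.2
    simp only [probReal_univ, add_sub_cancel_right] at hgibbs
    exact_mod_cast hgibbs
  · exact le_top

/-- Donsker–Varadhan: Gibbs' inequality for `P` against `Q.tilted f`, whose log-likelihood ratio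
differs from `llr P Q` by `-f + log ∫ exp f dQ`. -/
lemma integral_sub_log_integral_exp_le_klDiv [SigmaFinite Q] (hPQ : P ≪ Q) {f : α → ℝ}
    (hfP : Integrable f P) (hfQ : Integrable (fun x => exp (f x)) Q) :
    ((∫ x, f x ∂P - log (∫ x, exp (f x) ∂Q) : ℝ) : EReal) ≤ klDiv P Q := by
  unfold klDiv
  split_ifs with h
  · have : NeZero Q := ⟨fun hQ => NeZero.ne P (Measure.absolutelyContinuous_zero_iff.mp (hQ ▸ hPQ))⟩
    have := isProbabilityMeasure_tilted hfQ
    have hgibbs := InformationTheory.integral_llr_add_sub_measure_univ_nonneg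
      (hPQ.trans (absolutelyContinuous_tilted hfQ)) (integrable_llr_tilted_right hPQ hfP h.2 hfQ)
    rw [integral_llr_tilted_right hPQ hfP hfQ h.2] at hgibbs
    simp only [probReal_univ, add_sub_cancel_right] at hgibbs
    exact_mod_cast (by linarith : _ ≤ ∫ x, llr P Q x ∂P)
  · exact le_top

end DonskerVaradhan

/-- If under `Q` the identity centered at `m` is `σ`-subgaussian, then for every
probability measure `P ≪ Q` and every `λ ∈ [0,1)`,
`D_KL(P ‖ Q) ≥ (λ/(2σ²)) ∫ (x-m)² dP - ln (1/√(1-λ))`. -/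
theorem klDiv_ge_second_moment {m σ : ℝ}
    (Q : Measure ℝ) [IsProbabilityMeasure Q]
    (hsub : ∀ l : ℝ,
      ∫⁻ x, ENNReal.ofReal (Real.exp (l * (x - m))) ∂Q ≤
        ENNReal.ofReal (Real.exp (l ^ 2 * σ ^ 2 / 2)))
    (P : Measure ℝ) [IsProbabilityMeasure P] (hPQ : P ≪ Q) :
    ∀ l : ℝ, 0 ≤ l → l < 1 →
      ((l / (2 * σ ^ 2) * ∫ x, (x - m) ^ 2 ∂P - Real.log (1 / Real.sqrt (1 - l)) : ℝ) : EReal)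
        ≤ klDiv P Q := by
  intro l hl0 hl1
  set f : ℝ → ℝ := fun x => l / (2 * σ ^ 2) * (x - m) ^ 2
  have hmoment : ∫⁻ x, ENNReal.ofReal (exp (f x)) ∂Q ≤ ENNReal.ofReal (1 / √(1 - l)) :=
    lintegral_exp_mul_sq_le_of_lintegral_exp_mul_le (measurable_id.sub_const m) hsub hl0 hl1
  have hlog_nonneg : 0 ≤ log (1 / √(1 - l)) := log_nonneg (one_le_one_div_sqrt_one_sub hl0 hl1)
  by_cases hP : Integrable (fun x => (x - m) ^ 2) P
  swap
  · rw [integral_undef hP, mul_zero, zero_sub]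
    exact le_trans (mod_cast neg_nonpos.mpr hlog_nonneg) klDiv_nonneg
  have hfQ : Integrable (fun x => exp (f x)) Q :=
    ⟨by fun_prop, (hasFiniteIntegral_iff_ofReal (ae_of_all _ fun _ => (exp_pos _).le)).mpr
      (hmoment.trans_lt ENNReal.ofReal_lt_top)⟩
  have hpartition : ∫ x, exp (f x) ∂Q ≤ 1 / √(1 - l) := by
    rw [integral_eq_lintegral_of_nonneg_ae (ae_of_all _ fun _ => (exp_pos _).le) (by fun_prop)]
    exact ENNReal.toReal_le_of_le_ofReal (by positivity) hmoment
  refine le_trans ?_ (integral_sub_log_integral_exp_le_klDiv hPQ (hP.const_mul _) hfQ)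
  rw [integral_const_mul]
  exact mod_cast sub_le_sub_left (log_le_log (integral_exp_pos hfQ) hpartition) _
end

section
/- Let 𝒳 and Θ be measurable spaces, let ν be a probability measure on 𝒳, and let φ: Θ × 𝒳 → ℝ and m: Θ → ℝ be measurable maps such that for every θ ∈ Θ, the function x ↦ φ(θ, x) has mean m(θ) under ν and φ(θ, ·) − m(θ) is σ-subgaussian under ν. Let (T, X) be a pair of random variables with values in Θ × 𝒳 such that the marginal law of X is ν, and suppose the mutual information bound D_KL(law(T, X) ‖ law(T) ⊗ ν) ≤ B holds for some B ≥ 0. Then E[(φ(T, X) − m(T))²] ≤ σ² · inf over λ ∈ (0,1) of (2B − ln(1 − λ))/λ. -/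
/-!
By the Donsker–Varadhan variational formula, for every `t > 0`,
`t · E[F] ≤ D_KL(law(T, X) ‖ law(T) ⊗ ν) + log E_{law(T) ⊗ ν}[exp (t F)]` where
`F(θ, x) = (φ(θ, x) - m(θ))²`. Under `law(T) ⊗ ν` the data are drawn from `ν` independently of
the query, and a `σ`-subgaussian `Y` satisfies `E[exp (t Y²)] ≤ (1 - 2tσ²)^{-1/2}` when
`2tσ² < 1`: writing `exp (t Y²)` as a Gaussian average of `exp (s Y)` reduces this to the bound on
the moment generating function. Taking `t = λ / (2σ²)` gives the claim.
-/

open MeasureTheory Real Classical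

lemma klDiv_le_coe_iff {α : Type*} [MeasurableSpace α] {μ ν : Measure α} {B : ℝ} :
    klDiv μ ν ≤ (B : EReal) ↔
      μ ≪ ν ∧ Integrable (llr μ ν) μ ∧ ∫ x, llr μ ν x ∂μ ≤ B := by
  unfold klDiv
  split_ifs with h
  · simp [h, llr_def]
  · simp only [top_le_iff, EReal.coe_ne_top, false_iff]
    exact fun h' ↦ h ⟨h'.1, h'.2.1⟩

lemma exp_mul_sub_mul_sq_eq {a : ℝ} (ha : 0 < a) (c s : ℝ) :
    exp (c * s - a * s ^ 2) = exp (-a * (s - c / (2 * a)) ^ 2) * exp (c ^ 2 / (4 * a)) := by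
  rw [← exp_add]
  congr 1
  field_simp
  ring

lemma integrable_exp_mul_sub_mul_sq {a : ℝ} (ha : 0 < a) (c : ℝ) :
    Integrable fun s : ℝ ↦ exp (c * s - a * s ^ 2) := by
  simp_rw [exp_mul_sub_mul_sq_eq ha]
  exact ((integrable_exp_neg_mul_sq ha).comp_sub_right _).mul_const _

lemma integral_exp_mul_sub_mul_sq {a : ℝ} (ha : 0 < a) (c : ℝ) :
    ∫ s : ℝ, exp (c * s - a * s ^ 2) = √(π / a) * exp (c ^ 2 / (4 * a)) := by
  simp_rw [exp_mul_sub_mul_sq_eq ha]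
  rw [integral_mul_const, integral_sub_right_eq_self (fun s ↦ exp (-a * s ^ 2)), integral_gaussian]

lemma ofReal_exp_sq_div_eq_lintegral {a : ℝ} (ha : 0 < a) (c : ℝ) :
    ENNReal.ofReal (exp (c ^ 2 / (4 * a))) =
      ENNReal.ofReal √(a / π) * ∫⁻ s : ℝ, ENNReal.ofReal (exp (c * s - a * s ^ 2)) := by
  rw [← ofReal_integral_eq_lintegral_ofReal (integrable_exp_mul_sub_mul_sq ha c)
      (ae_of_all _ fun s ↦ (exp_pos _).le), integral_exp_mul_sub_mul_sq ha,
    ← ENNReal.ofReal_mul (sqrt_nonneg _), ← mul_assoc, ← sqrt_mul (by positivity),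
    div_mul_div_cancel₀ pi_pos.ne', div_self ha.ne', sqrt_one, one_mul]

lemma lintegral_exp_mul_sq_le_of_mgf_le {α : Type*} [MeasurableSpace α] (μ : Measure α)
    [SFinite μ] {g : α → ℝ} (hg : Measurable g) {σ t : ℝ} (ht : 0 < t)
    (htσ : 2 * t * σ ^ 2 < 1)
    (hmgf : ∀ s : ℝ, ∫⁻ x, ENNReal.ofReal (exp (s * g x)) ∂μ ≤
      ENNReal.ofReal (exp (s ^ 2 * σ ^ 2 / 2))) :
    ∫⁻ x, ENNReal.ofReal (exp (t * g x ^ 2)) ∂μ ≤ ENNReal.ofReal (1 / √(1 - 2 * t * σ ^ 2)) := by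
  set a := 1 / (4 * t)
  set b := (1 - 2 * t * σ ^ 2) / (4 * t)
  have ha : 0 < a := by positivity
  have hb : 0 < b := div_pos (by linarith) (by positivity)
  have hab : a / b = 1 / (1 - 2 * t * σ ^ 2) := by
    have : 1 - 2 * t * σ ^ 2 ≠ 0 := by linarith
    simp only [a, b]
    field_simp
  have hlin : ∀ x, ENNReal.ofReal (exp (t * g x ^ 2)) =
      ENNReal.ofReal √(a / π) * ∫⁻ s : ℝ, ENNReal.ofReal (exp (g x * s - a * s ^ 2)) := by
    intro x
    rw [← ofReal_exp_sq_div_eq_lintegral ha]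
    congr 2
    simp only [a]
    field_simp
  have hmgf_gauss : ∀ s : ℝ, ∫⁻ x, ENNReal.ofReal (exp (g x * s - a * s ^ 2)) ∂μ ≤
      ENNReal.ofReal (exp (-b * s ^ 2)) := by
    intro s
    have hsplit : ∀ c, exp (c * s - a * s ^ 2) = exp (s * c) * exp (-(a * s ^ 2)) := by
      intro c
      rw [← exp_add, mul_comm s c, sub_eq_add_neg]
    simp_rw [hsplit, ENNReal.ofReal_mul (exp_pos _).le]
    rw [lintegral_mul_const' _ _ ENNReal.ofReal_ne_top]
    calc _ ≤ ENNReal.ofReal (exp (s ^ 2 * σ ^ 2 / 2)) * ENNReal.ofReal (exp (-(a * s ^ 2))) := by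
          gcongr
          exact hmgf s
      _ = ENNReal.ofReal (exp (-b * s ^ 2)) := by
          rw [← ENNReal.ofReal_mul (exp_pos _).le, ← exp_add]
          congr 2
          simp only [a, b]
          field_simp
          ring
  calc ∫⁻ x, ENNReal.ofReal (exp (t * g x ^ 2)) ∂μ
      = ENNReal.ofReal √(a / π) *
          ∫⁻ s : ℝ, ∫⁻ x, ENNReal.ofReal (exp (g x * s - a * s ^ 2)) ∂μ := by
        simp_rw [hlin]
        rw [lintegral_const_mul' _ _ ENNReal.ofReal_ne_top, lintegral_lintegral_swap (by fun_prop)]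
    _ ≤ ENNReal.ofReal √(a / π) * ∫⁻ s : ℝ, ENNReal.ofReal (exp (-b * s ^ 2)) := by
        gcongr
        exact hmgf_gauss _
    _ = ENNReal.ofReal (1 / √(1 - 2 * t * σ ^ 2)) := by
        rw [← ofReal_integral_eq_lintegral_ofReal (integrable_exp_neg_mul_sq hb)
            (ae_of_all _ fun s ↦ (exp_pos _).le), integral_gaussian,
          ← ENNReal.ofReal_mul (sqrt_nonneg _), ← sqrt_mul (by positivity),
          div_mul_div_cancel₀ pi_pos.ne', hab, sqrt_div' _ (by linarith), sqrt_one]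

lemma integral_le_integral_llr_add_log_integral_exp {α : Type*} [MeasurableSpace α]
    {μ ν : Measure α} [IsProbabilityMeasure μ] [IsProbabilityMeasure ν] {f : α → ℝ}
    (hμν : μ ≪ ν) (h_int : Integrable (llr μ ν) μ) (hfμ : Integrable f μ)
    (hfν : Integrable (fun x ↦ exp (f x)) ν) :
    ∫ x, f x ∂μ ≤ ∫ x, llr μ ν x ∂μ + log (∫ x, exp (f x) ∂ν) := by
  have : IsProbabilityMeasure (ν.tilted f) := isProbabilityMeasure_tilted hfν
  have h_gibbs := InformationTheory.integral_llr_add_sub_measure_univ_nonneg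
    (hμν.trans (absolutelyContinuous_tilted hfν)) (integrable_llr_tilted_right hμν hfμ h_int hfν)
  rw [integral_llr_tilted_right hμν hfμ hfν h_int] at h_gibbs
  simp only [probReal_univ] at h_gibbs
  linarith

lemma integral_le_integral_llr_add_log_of_lintegral_exp_le {α : Type*} [MeasurableSpace α]
    {μ ν : Measure α} [IsProbabilityMeasure μ] [IsProbabilityMeasure ν] {f : α → ℝ} {C : ℝ}
    (hμν : μ ≪ ν) (h_int : Integrable (llr μ ν) μ) (hfμ : Integrable f μ)
    (hfν : AEStronglyMeasurable f ν)
    (hC : ∫⁻ x, ENNReal.ofReal (exp (f x)) ∂ν ≤ ENNReal.ofReal C) :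
    ∫ x, f x ∂μ ≤ ∫ x, llr μ ν x ∂μ + log C := by
  have h_exp_meas : AEStronglyMeasurable (fun x ↦ exp (f x)) ν :=
    continuous_exp.comp_aestronglyMeasurable hfν
  have h_exp_nonneg : 0 ≤ᵐ[ν] fun x ↦ exp (f x) := ae_of_all _ fun x ↦ (exp_pos _).le
  have h_exp_int : Integrable (fun x ↦ exp (f x)) ν :=
    (lintegral_ofReal_ne_top_iff_integrable h_exp_meas h_exp_nonneg).mp
      (ne_top_of_le_ne_top ENNReal.ofReal_ne_top hC)
  have h_exp_pos : 0 < ∫ x, exp (f x) ∂ν := integral_exp_pos h_exp_int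
  have h_exp_le : ∫ x, exp (f x) ∂ν ≤ C := by
    rw [← ofReal_integral_eq_lintegral_ofReal h_exp_int h_exp_nonneg,
      ENNReal.ofReal_le_ofReal_iff'] at hC
    exact hC.resolve_right h_exp_pos.not_ge
  calc ∫ x, f x ∂μ ≤ ∫ x, llr μ ν x ∂μ + log (∫ x, exp (f x) ∂ν) :=
        integral_le_integral_llr_add_log_integral_exp hμν h_int hfμ h_exp_int
    _ ≤ ∫ x, llr μ ν x ∂μ + log C := by gcongr

lemma lintegral_prod_exp_mul_sq_le_of_mgf_le {Θ 𝒳 : Type*} [MeasurableSpace Θ]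
    [MeasurableSpace 𝒳] (μ : Measure Θ) [IsProbabilityMeasure μ] (ν : Measure 𝒳) [SFinite ν]
    {g : Θ → 𝒳 → ℝ} (hg : Measurable (Function.uncurry g)) {σ t : ℝ} (ht : 0 < t)
    (htσ : 2 * t * σ ^ 2 < 1)
    (hmgf : ∀ θ, ∀ s : ℝ, ∫⁻ x, ENNReal.ofReal (exp (s * g θ x)) ∂ν ≤
      ENNReal.ofReal (exp (s ^ 2 * σ ^ 2 / 2))) :
    ∫⁻ p, ENNReal.ofReal (exp (t * g p.1 p.2 ^ 2)) ∂μ.prod ν ≤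
      ENNReal.ofReal (1 / √(1 - 2 * t * σ ^ 2)) := by
  rw [lintegral_prod _ (by fun_prop)]
  calc ∫⁻ θ, ∫⁻ x, ENNReal.ofReal (exp (t * g θ x ^ 2)) ∂ν ∂μ
      ≤ ∫⁻ _, ENNReal.ofReal (1 / √(1 - 2 * t * σ ^ 2)) ∂μ :=
        lintegral_mono fun θ ↦ lintegral_exp_mul_sq_le_of_mgf_le ν
          (hg.comp measurable_prodMk_left) ht htσ (hmgf θ)
    _ = ENNReal.ofReal (1 / √(1 - 2 * t * σ ^ 2)) := by simp

lemma le_mul_div_of_forall_mul_le_sub_log {I B s l : ℝ} (hs : 0 ≤ s) (hl : l ∈ Set.Ioo 0 1)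
    (h : ∀ t, 0 < t → 2 * t * s < 1 → t * I ≤ B - log (1 - 2 * t * s) / 2) :
    I ≤ s * ((2 * B - log (1 - l)) / l) := by
  obtain ⟨hl₀, hl₁⟩ := hl
  rcases hs.eq_or_lt with rfl | hs
  · rw [zero_mul]
    by_contra! hI
    have := h ((|B| + 1) / I) (by positivity) (by simp)
    rw [div_mul_cancel₀ _ hI.ne'] at this
    simp only [mul_zero, sub_zero, log_one, zero_div] at this
    linarith [le_abs_self B]
  · have h2ts : 2 * (l / (2 * s)) * s = l := by field_simp
    have := h (l / (2 * s)) (by positivity) (by rwa [h2ts])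
    rw [h2ts, ← le_div_iff₀' (by positivity)] at this
    exact this.trans_eq (by rw [div_div_eq_mul_div]; ring)

theorem expected_sq_error_le_of_mutualInfo_le_general {𝒳 Θ : Type*}
    [MeasurableSpace 𝒳] [MeasurableSpace Θ]
    (ν : Measure 𝒳) [IsProbabilityMeasure ν]
    (φ : Θ → 𝒳 → ℝ) (hφ : Measurable (Function.uncurry φ))
    (m : Θ → ℝ) (hm : Measurable m) (σ : ℝ)
    (hsub : ∀ θ, ∀ l : ℝ,
      ∫⁻ x, ENNReal.ofReal (Real.exp (l * (φ θ x - m θ))) ∂ν ≤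
        ENNReal.ofReal (Real.exp (l ^ 2 * σ ^ 2 / 2)))
    {Ω : Type*} [MeasurableSpace Ω] (P : Measure Ω) [IsProbabilityMeasure P]
    (T : Ω → Θ) (X : Ω → 𝒳) (hT : Measurable T) (hX : Measurable X)
    (B : ℝ) (hB : 0 ≤ B)
    (hMI : klDiv (Measure.map (fun ω => (T ω, X ω)) P) ((Measure.map T P).prod ν)
      ≤ (B : EReal)) :
    ∫ ω, (φ (T ω) (X ω) - m (T ω)) ^ 2 ∂P ≤
      σ ^ 2 * ⨅ l : Set.Ioo (0 : ℝ) 1, (2 * B - Real.log (1 - l.1)) / l.1 := by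
  set P' := P.map fun ω ↦ (T ω, X ω)
  have : IsProbabilityMeasure (P.map T) := Measure.isProbabilityMeasure_map hT.aemeasurable
  have : IsProbabilityMeasure P' := Measure.isProbabilityMeasure_map (hT.prodMk hX).aemeasurable
  obtain ⟨hP'_ac, h_llr, h_KL⟩ := klDiv_le_coe_iff.mp hMI
  have h_dev_meas : Measurable fun p : Θ × 𝒳 ↦ φ p.1 p.2 - m p.1 := hφ.sub (hm.comp measurable_fst)
  set F := fun p : Θ × 𝒳 ↦ (φ p.1 p.2 - m p.1) ^ 2
  have h_tilt : ∀ t, 0 < t → 2 * t * σ ^ 2 < 1 →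
      t * ∫ p, F p ∂P' ≤ B - log (1 - 2 * t * σ ^ 2) / 2 := by
    intro t ht htσ
    by_cases hF : Integrable F P'
    · rw [← integral_const_mul]
      calc ∫ p, t * F p ∂P' ≤ ∫ p, llr P' _ p ∂P' + log (1 / √(1 - 2 * t * σ ^ 2)) :=
            integral_le_integral_llr_add_log_of_lintegral_exp_le hP'_ac h_llr (hF.const_mul t)
              (by fun_prop) (lintegral_prod_exp_mul_sq_le_of_mgf_le _ ν h_dev_meas ht htσ hsub)
        _ ≤ B - log (1 - 2 * t * σ ^ 2) / 2 := by
            rw [one_div, log_inv, log_sqrt (by linarith)]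
            linarith
    · rw [integral_undef hF, mul_zero]
      linarith [log_nonpos (by linarith : 0 ≤ 1 - 2 * t * σ ^ 2) (by nlinarith)]
  have : Nonempty (Set.Ioo (0 : ℝ) 1) := ⟨⟨1 / 2, by norm_num⟩⟩
  rw [← integral_map (hT.prodMk hX).aemeasurable (h_dev_meas.pow_const 2).aestronglyMeasurable,
    Real.mul_iInf_of_nonneg (sq_nonneg σ)]
  exact le_ciInf fun l ↦ le_mul_div_of_forall_mul_le_sub_log (sq_nonneg σ) l.2 h_tilt

/-- If every query `φ(θ, ·)` has mean `m θ` under `ν` and is `σ`-subgaussian,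
`X` has law `ν`, and the mutual information between the selected query `T` and the data `X`
is at most `B`, then `E[(φ(T, X) - m(T))²] ≤ σ² · inf_{λ ∈ (0,1)} (2B - ln(1-λ))/λ`. -/
theorem expected_sq_error_le_of_mutualInfo_le {𝒳 Θ : Type*}
    [MeasurableSpace 𝒳] [MeasurableSpace Θ]
    (ν : Measure 𝒳) [IsProbabilityMeasure ν]
    (φ : Θ → 𝒳 → ℝ) (hφ : Measurable (Function.uncurry φ))
    (m : Θ → ℝ) (hm : Measurable m) (σ : ℝ)
    (hmean : ∀ θ, ∫ x, φ θ x ∂ν = m θ)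
    (hsub : ∀ θ, ∀ l : ℝ,
      ∫⁻ x, ENNReal.ofReal (Real.exp (l * (φ θ x - m θ))) ∂ν ≤
        ENNReal.ofReal (Real.exp (l ^ 2 * σ ^ 2 / 2)))
    {Ω : Type*} [MeasurableSpace Ω] (P : Measure Ω) [IsProbabilityMeasure P]
    (T : Ω → Θ) (X : Ω → 𝒳) (hT : Measurable T) (hX : Measurable X)
    (hlaw : Measure.map X P = ν)
    (B : ℝ) (hB : 0 ≤ B)
    (hMI : klDiv (Measure.map (fun ω => (T ω, X ω)) P) ((Measure.map T P).prod ν)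
      ≤ (B : EReal)) :
    ∫ ω, (φ (T ω) (X ω) - m (T ω)) ^ 2 ∂P ≤
      σ ^ 2 * ⨅ l : Set.Ioo (0 : ℝ) 1, (2 * B - Real.log (1 - l.1)) / l.1 :=
  expected_sq_error_le_of_mutualInfo_le_general ν φ hφ m hm σ hsub P T X hT hX B hB hMI
end
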